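/- Let r > 3, let f ∈ F_∞ attain its minimum f⋆ at x⋆, and let X solve the generalized ODE Ẍ + (r/t)Ẋ + ∇f(X) = 0 with X(0) = x₀, Ẋ(0) = 0. Then for every t > 0, f(X(t)) − f⋆ ≤ (r−1)²‖x₀ − x⋆‖²/(2t²), and moreover ∫₀^∞ t·(f(X(t)) − f⋆) dt ≤ (r−1)²‖x₀ − x⋆‖²/(2(r−3)). -/

import Mathlib

/-!
The argument is a Lyapunov one. Along the trajectory the energy
`E(t) = 2t²(f(X) - f⋆)/(r-1) + (r-1)‖X + tẊ/(r-1) - x⋆‖²`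
has, by the ODE, derivative `4t(f(X) - f⋆)/(r-1) - 2t⟪∇f(X), X - x⋆⟫`, and convexity
(`f(X) - f⋆ ≤ ⟪∇f(X), X - x⋆⟫`) bounds this by `-(2(r-3)/(r-1)) t (f(X) - f⋆)`. Integrating,
`E(T) + (2(r-3)/(r-1)) ∫₀ᵀ t (f(X) - f⋆) dt ≤ E(0) = (r-1)‖x₀ - x⋆‖²`; since both terms on the
left are nonnegative, dropping either one gives the pointwise and the integral bound.
-/

open Set Filter Topology MeasureTheory

noncomputable section

abbrev E (n : ℕ) := EuclideanSpace ℝ (Fin n)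

def MemFL (n : ℕ) (L : ℝ) (f : E n → ℝ) : Prop :=
  ConvexOn ℝ Set.univ f ∧ ContDiff ℝ 1 f ∧
    ∀ x y, ‖gradient f x - gradient f y‖ ≤ L * ‖x - y‖

def MemFInf (n : ℕ) (f : E n → ℝ) : Prop := ∃ L > 0, MemFL n L f

/-- A solution of the generalized ODE `Ẍ + (r/t)Ẋ + ∇f(X) = 0`, `X(0) = x₀`, `Ẋ(0) = 0`,
C² on `(0,∞)`, C¹ on `[0,∞)`. -/
def GenNesterovSol (n : ℕ) (r : ℝ) (f : E n → ℝ) (x0 : E n) (X : ℝ → E n) : Prop :=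
  X 0 = x0 ∧
  ContDiffOn ℝ 1 X (Set.Ici 0) ∧
  ContDiffOn ℝ 2 X (Set.Ioi 0) ∧
  derivWithin X (Set.Ici 0) 0 = 0 ∧
  ∀ t > (0:ℝ), deriv (deriv X) t + (r / t) • deriv X t + gradient f (X t) = 0

open scoped RealInnerProductSpace

theorem ConvexOn.add_apply_sub_le {V : Type*} [NormedAddCommGroup V] [NormedSpace ℝ V]
    {s : Set V} {f : V → ℝ} {f' : V →L[ℝ] ℝ} {x y : V} (hconv : ConvexOn ℝ s f)
    (hx : x ∈ s) (hy : y ∈ s) (hf : HasFDerivAt f f' x) :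
    f x + f' (y - x) ≤ f y := by
  set φ : ℝ → ℝ := f ∘ AffineMap.lineMap x y
  have hφconv : ConvexOn ℝ (AffineMap.lineMap x y ⁻¹' s) φ := hconv.comp_affineMap _
  have hφ : HasDerivAt φ (f' (y - x)) 0 := by
    have hline : HasDerivAt (AffineMap.lineMap x y : ℝ → V) (y - x) 0 :=
      AffineMap.hasDerivAt_lineMap
    simpa using hf.comp_hasDerivAt_of_eq 0 hline (by simp)
  have hslope := hφconv.le_slope_of_hasDerivWithinAt (x := 0) (y := 1) (by simpa using hx)
    (by simpa using hy) one_pos hφ.hasDerivWithinAt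
  have : slope φ 0 1 = f y - f x := by simp [slope_def_field, φ]
  linarith

theorem ConvexOn.add_inner_gradient_le {F : Type*} [NormedAddCommGroup F]
    [InnerProductSpace ℝ F] [CompleteSpace F] {s : Set F} {f : F → ℝ} {x y : F}
    (hconv : ConvexOn ℝ s f) (hx : x ∈ s) (hy : y ∈ s) (hf : DifferentiableAt ℝ f x) :
    f x + ⟪gradient f x, y - x⟫ ≤ f y := by
  simpa using hconv.add_apply_sub_le hx hy (hasGradientAt_iff_hasFDerivAt.1 hf.hasGradientAt)

section DampedGradientFlow

variable {F : Type*} [NormedAddCommGroup F] [InnerProductSpace ℝ F]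

def highFrictionEnergy (r : ℝ) (f : F → ℝ) (xstar : F) (X X' : ℝ → F) (t : ℝ) : ℝ :=
  2 / (r - 1) * t ^ 2 * (f (X t) - f xstar) +
    (r - 1) * ‖X t + (t / (r - 1)) • X' t - xstar‖ ^ 2

theorem highFrictionEnergy_zero (r : ℝ) (f : F → ℝ) (xstar : F) (X X' : ℝ → F) :
    highFrictionEnergy r f xstar X X' 0 = (r - 1) * ‖X 0 - xstar‖ ^ 2 := by
  simp [highFrictionEnergy]

theorem le_highFrictionEnergy {r : ℝ} (hr : 1 ≤ r) (f : F → ℝ) (xstar : F) (X X' : ℝ → F)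
    (t : ℝ) : 2 / (r - 1) * t ^ 2 * (f (X t) - f xstar) ≤ highFrictionEnergy r f xstar X X' t :=
  le_add_of_nonneg_right (mul_nonneg (sub_nonneg.2 hr) (sq_nonneg _))

variable [CompleteSpace F]

structure IsDampedGradientFlow (r : ℝ) (f : F → ℝ) (X X' : ℝ → F) : Prop where
  continuousOn : ContinuousOn X (Ici 0)
  continuousOn_deriv : ContinuousOn X' (Ici 0)
  hasDerivAt : ∀ t > 0, HasDerivAt X (X' t) t
  hasDerivAt_deriv : ∀ t > 0, HasDerivAt X' (-(r / t) • X' t - gradient f (X t)) t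

variable {r : ℝ} {f : F → ℝ} {xstar : F} {X X' : ℝ → F}

theorem hasDerivAt_highFrictionEnergy {t : ℝ} (hr : r ≠ 1) (ht : t ≠ 0)
    (hX : HasDerivAt X (X' t) t)
    (hX' : HasDerivAt X' (-(r / t) • X' t - gradient f (X t)) t)
    (hf : DifferentiableAt ℝ f (X t)) :
    HasDerivAt (highFrictionEnergy r f xstar X X')
      (4 * t / (r - 1) * (f (X t) - f xstar) - 2 * t * ⟪gradient f (X t), X t - xstar⟫) t := by
  have hr1 : r - 1 ≠ 0 := sub_ne_zero.2 hr
  have hfX : HasDerivAt (fun s => f (X s)) ⟪gradient f (X t), X' t⟫ t := by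
    simpa [Function.comp_def, InnerProductSpace.toDual_apply_apply] using
      (hasGradientAt_iff_hasFDerivAt.1 hf.hasGradientAt).comp_hasDerivAt t hX
  have hV : HasDerivAt (fun s => X s + (s / (r - 1)) • X' s - xstar)
      (-(t / (r - 1)) • gradient f (X t)) t := by
    refine ((hX.add (((hasDerivAt_id' t).div_const (r - 1)).smul hX')).sub_const
      xstar).congr_deriv ?_
    match_scalars
    · field_simp
      ring
    · field_simp
  refine ((((hasDerivAt_pow 2 t).const_mul (2 / (r - 1))).mul (hfX.sub_const (f xstar))).add
    (hV.norm_sq.const_mul (r - 1))).congr_deriv ?_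
  simp only [real_inner_comm (gradient f (X t)), inner_smul_right, inner_add_right,
    inner_sub_right]
  field_simp
  ring

theorem IsDampedGradientFlow.highFrictionEnergy_add_integral_le
    (hflow : IsDampedGradientFlow r f X X') (hr : 1 < r)
    (hconv : ConvexOn ℝ univ f) (hf : Differentiable ℝ f) {T : ℝ} (hT : 0 ≤ T) :
    highFrictionEnergy r f xstar X X' T +
        2 * (r - 3) / (r - 1) * ∫ t in 0..T, t * (f (X t) - f xstar) ≤
      highFrictionEnergy r f xstar X X' 0 := by
  have hr1 : 0 < r - 1 := sub_pos.2 hr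
  have hX := hflow.continuousOn.mono (Icc_subset_Ici_self : Icc 0 T ⊆ Ici 0)
  have hX' := hflow.continuousOn_deriv.mono (Icc_subset_Ici_self : Icc 0 T ⊆ Ici 0)
  have hfc := hf.continuous
  have hE : ContinuousOn (highFrictionEnergy r f xstar X X') (Icc 0 T) := by
    unfold highFrictionEnergy; fun_prop
  have hg : ContinuousOn (fun t => t * (f (X t) - f xstar)) (Icc 0 T) := by fun_prop
  have hdecay : ∀ t ∈ Ioo 0 T,
      4 * t / (r - 1) * (f (X t) - f xstar) - 2 * t * ⟪gradient f (X t), X t - xstar⟫ ≤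
        -(2 * (r - 3) / (r - 1) * (t * (f (X t) - f xstar))) := by
    intro t ht
    have hgap : f (X t) - f xstar ≤ ⟪gradient f (X t), X t - xstar⟫ := by
      have := hconv.add_inner_gradient_le (mem_univ _) (mem_univ xstar) (hf (X t))
      rw [← neg_sub, inner_neg_right] at this
      linarith
    calc _ ≤ 4 * t / (r - 1) * (f (X t) - f xstar) - 2 * t * (f (X t) - f xstar) := by
          gcongr; linarith [ht.1]
      _ = _ := by field_simp; ring
  have key := intervalIntegral.sub_le_integral_of_hasDeriv_right_of_le hT hE
    (φ := fun t => -(2 * (r - 3) / (r - 1) * (t * (f (X t) - f xstar))))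
    (fun t ht => (hasDerivAt_highFrictionEnergy hr.ne' ht.1.ne' (hflow.hasDerivAt t ht.1)
      (hflow.hasDerivAt_deriv t ht.1) (hf _)).hasDerivWithinAt)
    (hg.const_mul _).neg.integrableOn_Icc hdecay
  rw [intervalIntegral.integral_neg, intervalIntegral.integral_const_mul] at key
  linarith

theorem IsDampedGradientFlow.sub_le_div_sq (hflow : IsDampedGradientFlow r f X X') (hr : 3 ≤ r)
    (hconv : ConvexOn ℝ univ f) (hf : Differentiable ℝ f) (hmin : IsMinOn f univ xstar)
    {t : ℝ} (ht : 0 < t) :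
    f (X t) - f xstar ≤ (r - 1) ^ 2 * ‖X 0 - xstar‖ ^ 2 / (2 * t ^ 2) := by
  have hr1 : 0 < r - 1 := by linarith
  have hdissip : 0 ≤ 2 * (r - 3) / (r - 1) * ∫ s in 0..t, s * (f (X s) - f xstar) := by
    refine mul_nonneg (by positivity) (intervalIntegral.integral_nonneg ht.le fun s hs => ?_)
    exact mul_nonneg hs.1 (sub_nonneg.2 (hmin (mem_univ _)))
  have key := hflow.highFrictionEnergy_add_integral_le (xstar := xstar) (by linarith) hconv hf ht.le
  have hbound : 2 / (r - 1) * t ^ 2 * (f (X t) - f xstar) ≤ (r - 1) * ‖X 0 - xstar‖ ^ 2 := by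
    linarith [le_highFrictionEnergy (by linarith : (1 : ℝ) ≤ r) f xstar X X' t,
      highFrictionEnergy_zero r f xstar X X']
  rw [le_div_iff₀ (by positivity)]
  have := mul_le_mul_of_nonneg_left hbound hr1.le
  field_simp at this
  linarith

theorem IsDampedGradientFlow.intervalIntegral_le (hflow : IsDampedGradientFlow r f X X')
    (hr : 3 < r) (hconv : ConvexOn ℝ univ f) (hf : Differentiable ℝ f)
    (hmin : IsMinOn f univ xstar) {T : ℝ} (hT : 0 ≤ T) :
    ∫ t in 0..T, t * (f (X t) - f xstar) ≤ (r - 1) ^ 2 * ‖X 0 - xstar‖ ^ 2 / (2 * (r - 3)) := by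
  have hr1 : 0 < r - 1 := by linarith
  have key := hflow.highFrictionEnergy_add_integral_le (xstar := xstar) (by linarith) hconv hf hT
  have hET : 0 ≤ highFrictionEnergy r f xstar X X' T :=
    (mul_nonneg (by positivity) (sub_nonneg.2 (hmin (mem_univ _)))).trans
      (le_highFrictionEnergy (by linarith : (1 : ℝ) ≤ r) f xstar X X' T)
  rw [highFrictionEnergy_zero] at key
  rw [le_div_iff₀ (by linarith)]
  have := mul_le_mul_of_nonneg_left (by linarith : 2 * (r - 3) / (r - 1) *
    ∫ t in 0..T, t * (f (X t) - f xstar) ≤ (r - 1) * ‖X 0 - xstar‖ ^ 2) hr1.le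
  field_simp at this
  linarith

end DampedGradientFlow

theorem integrableOn_Ioi_of_intervalIntegral_le {g : ℝ → ℝ} {a C : ℝ}
    (hcont : ContinuousOn g (Ici a)) (hnonneg : ∀ t ∈ Ioi a, 0 ≤ g t)
    (hle : ∀ b ≥ a, ∫ t in a..b, g t ≤ C) : IntegrableOn g (Ioi a) := by
  refine integrableOn_Ioi_of_intervalIntegral_norm_bounded C a
    (fun b => ((hcont.mono Icc_subset_Ici_self).integrableOn_Icc).mono_set Ioc_subset_Icc_self)
    tendsto_id ((eventually_ge_atTop a).mono fun b (hb : a ≤ b) => ?_)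
  rw [id, intervalIntegral.integral_of_le hb, setIntegral_congr_fun measurableSet_Ioc
    fun t ht => Real.norm_of_nonneg (hnonneg t ht.1), ← intervalIntegral.integral_of_le hb]
  exact hle b hb

theorem setIntegral_Ioi_le_of_intervalIntegral_le {g : ℝ → ℝ} {a C : ℝ}
    (hg : IntegrableOn g (Ioi a)) (hle : ∀ b ≥ a, ∫ t in a..b, g t ≤ C) :
    ∫ t in Ioi a, g t ≤ C :=
  le_of_tendsto (intervalIntegral_tendsto_integral_Ioi a hg tendsto_id)
    ((eventually_ge_atTop a).mono hle)

theorem GenNesterovSol.isDampedGradientFlow {n : ℕ} {r : ℝ} {f : E n → ℝ} {x0 : E n}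
    {X : ℝ → E n} (hX : GenNesterovSol n r f x0 X) :
    IsDampedGradientFlow r f X (derivWithin X (Ici 0)) := by
  obtain ⟨-, hC1, hC2, -, hODE⟩ := hX
  have hvel : ∀ t > 0, derivWithin X (Ici 0) t = deriv X t :=
    fun t ht => derivWithin_of_mem_nhds (Ici_mem_nhds ht)
  have hvel_C1 : ContDiffOn ℝ 1 (deriv X) (Ioi 0) :=
    (hC2.derivWithin (uniqueDiffOn_Ioi 0) (by norm_num)).congr
      fun s hs => (derivWithin_of_isOpen isOpen_Ioi hs).symm
  refine ⟨hC1.continuousOn, hC1.continuousOn_derivWithin (uniqueDiffOn_Ici 0) le_rfl,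
    fun t ht => ?_, fun t ht => ?_⟩
  · rw [hvel t ht]
    exact ((hC2.differentiableOn (by norm_num) t ht).differentiableAt (Ioi_mem_nhds ht)).hasDerivAt
  · have hacc : deriv (deriv X) t = -(r / t) • deriv X t - gradient f (X t) := by
      linear_combination (norm := module) hODE t ht
    rw [hvel t ht, ← hacc]
    refine ((hvel_C1.differentiableOn one_ne_zero t ht).differentiableAt
      (Ioi_mem_nhds ht)).hasDerivAt.congr_of_eventuallyEq ?_
    filter_upwards [Ioi_mem_nhds ht] with s hs using hvel s hs

/-- **Theorem 5 (high friction, continuous time).**  For `r > 3`, the solution `X` of the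
generalized ODE satisfies `f(X(t)) - f⋆ ≤ (r-1)²‖x₀-x⋆‖²/(2t²)` and
`∫₀^∞ t (f(X(t)) - f⋆) dt ≤ (r-1)²‖x₀-x⋆‖²/(2(r-3))`. -/
theorem gen_ode_high_friction (n : ℕ) (r : ℝ) (hr : 3 < r)
    (f : E n → ℝ) (hf : MemFInf n f)
    (xstar : E n) (hmin : IsMinOn f Set.univ xstar)
    (x0 : E n) (X : ℝ → E n) (hX : GenNesterovSol n r f x0 X) :
    (∀ t > (0:ℝ), f (X t) - f xstar ≤ (r - 1) ^ 2 * ‖x0 - xstar‖ ^ 2 / (2 * t ^ 2)) ∧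
    IntegrableOn (fun t => t * (f (X t) - f xstar)) (Set.Ioi 0) ∧
    ∫ t in Set.Ioi (0:ℝ), t * (f (X t) - f xstar) ≤
      (r - 1) ^ 2 * ‖x0 - xstar‖ ^ 2 / (2 * (r - 3)) := by
  obtain ⟨-, -, hconv, hsmooth, -⟩ := hf
  have hdiff : Differentiable ℝ f := hsmooth.differentiable one_ne_zero
  have hflow := hX.isDampedGradientFlow
  obtain ⟨rfl, -⟩ := hX
  have hbound := fun T (hT : T ≥ 0) => hflow.intervalIntegral_le hr hconv hdiff hmin hT
  have hint : IntegrableOn (fun t => t * (f (X t) - f xstar)) (Ioi 0) := by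
    refine integrableOn_Ioi_of_intervalIntegral_le ?_
      (fun t ht => mul_nonneg (le_of_lt ht) (sub_nonneg.2 (hmin (mem_univ _)))) hbound
    have hXc := hflow.continuousOn
    have hfc := hdiff.continuous
    fun_prop
  exact ⟨fun t ht => hflow.sub_le_div_sq hr.le hconv hdiff hmin ht, hint,
    setIntegral_Ioi_le_of_intervalIntegral_le hint hbound⟩
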